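/- arXiv:1205.6350 — 4 statements merged into one kernel-verified Lean document; each statement's English description precedes it below -/
import Mathlib

section
/- The fields n₁ and n₂ form a pseudo-orthonormal normal frame of the meridian surface of parabolic type: for all (u,v) ∈ I × J one has ⟨n₁,n₁⟩ = 1, ⟨n₂,n₂⟩ = −1, ⟨n₁,n₂⟩ = 0, and ⟨n₁,z_u⟩ = ⟨n₁,z_v⟩ = ⟨n₂,z_u⟩ = ⟨n₂,z_v⟩ = 0. -/
namespace MeridianParabolic

noncomputable section

/-- The Minkowski inner product of signature (3,1) on `ℝ⁴`:
`⟨x,y⟩ = x₁y₁ + x₂y₂ + x₃y₃ − x₄y₄`. -/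
def mink (x y : Fin 4 → ℝ) : ℝ := x 0 * y 0 + x 1 * y 1 + x 2 * y 2 - x 3 * y 3

/-- The first standard basis vector `e₁`. -/
def e1 : Fin 4 → ℝ := ![1, 0, 0, 0]

/-- The second standard basis vector `e₂`. -/
def e2 : Fin 4 → ℝ := ![0, 1, 0, 0]

/-- The lightlike vector `ξ₁ = (e₃ + e₄)/√2`. -/
def xi1 : Fin 4 → ℝ := ![0, 0, 1 / Real.sqrt 2, 1 / Real.sqrt 2]

/-- The lightlike vector `ξ₂ = (−e₃ + e₄)/√2`. -/
def xi2 : Fin 4 → ℝ := ![0, 0, -(1 / Real.sqrt 2), 1 / Real.sqrt 2]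

/-- The meridian surface of parabolic type
`z(u,v) = fφ cos v · e₁ + fφ sin v · e₂ + (fφ²/2 + g) ξ₁ + f ξ₂`. -/
def z (f g φ : ℝ → ℝ) (u v : ℝ) : Fin 4 → ℝ :=
  (f u * φ v * Real.cos v) • e1 + (f u * φ v * Real.sin v) • e2 +
    (f u * (φ v) ^ 2 / 2 + g u) • xi1 + f u • xi2

/-- The partial derivative `z_u`. -/
def zu (f g φ : ℝ → ℝ) (u v : ℝ) : Fin 4 → ℝ := deriv (fun t => z f g φ t v) u

/-- The partial derivative `z_v`. -/
def zv (f g φ : ℝ → ℝ) (u v : ℝ) : Fin 4 → ℝ := deriv (fun t => z f g φ u t) v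

/-- The second partial derivative `z_uu`. -/
def zuu (f g φ : ℝ → ℝ) (u v : ℝ) : Fin 4 → ℝ := deriv (fun t => zu f g φ t v) u

/-- The second partial derivative `z_uv`. -/
def zuv (f g φ : ℝ → ℝ) (u v : ℝ) : Fin 4 → ℝ := deriv (fun t => zu f g φ u t) v

/-- The second partial derivative `z_vv`. -/
def zvv (f g φ : ℝ → ℝ) (u v : ℝ) : Fin 4 → ℝ := deriv (fun t => zv f g φ u t) v

/-- The normal field `n₁ = ((φ̇ sin v + φ cos v) e₁ + (−φ̇ cos v + φ sin v) e₂ + φ² ξ₁)/√(φ̇² + φ²)`. -/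
def n1 (φ : ℝ → ℝ) (v : ℝ) : Fin 4 → ℝ :=
  (Real.sqrt ((deriv φ v) ^ 2 + (φ v) ^ 2))⁻¹ •
    ((deriv φ v * Real.sin v + φ v * Real.cos v) • e1 +
      (-(deriv φ v) * Real.cos v + φ v * Real.sin v) • e2 + (φ v) ^ 2 • xi1)

/-- The normal field `n₂ = √(−f'/(2g')) (φ cos v e₁ + φ sin v e₂ + ((f'φ² − 2g')/(2f')) ξ₁ + ξ₂)`. -/
def n2 (f g φ : ℝ → ℝ) (u v : ℝ) : Fin 4 → ℝ :=
  Real.sqrt (-(deriv f u) / (2 * deriv g u)) •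
    ((φ v * Real.cos v) • e1 + (φ v * Real.sin v) • e2 +
      ((deriv f u * (φ v) ^ 2 - 2 * deriv g u) / (2 * deriv f u)) • xi1 + xi2)

/-! In the frame `e₁, e₂, ξ₁, ξ₂` the Minkowski product reads `aa' + bb' − (cd' + dc')`.
Writing `n₁`, `n₂`, `z_u`, `z_v` in these coordinates (`frameVec`), each of the seven identities
becomes, after pulling out the normalising square roots, a polynomial identity modulo
`sin² v + cos² v = 1`; only the two norms need the values of the normalising factors. -/

open Real

def frameVec (a b c d : ℝ) : Fin 4 → ℝ := a • e1 + b • e2 + c • xi1 + d • xi2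

lemma mink_frameVec (a b c d a' b' c' d' : ℝ) :
    mink (frameVec a b c d) (frameVec a' b' c' d') = a * a' + b * b' - (c * d' + d * c') := by
  have h : (√2)⁻¹ * (√2)⁻¹ = 2⁻¹ := by rw [← mul_inv, mul_self_sqrt zero_le_two]
  simp [mink, frameVec, e1, e2, xi1, xi2]
  linear_combination -2 * (c * d' + d * c') * h

lemma mink_smul_left (c : ℝ) (x y : Fin 4 → ℝ) : mink (c • x) y = c * mink x y := by
  simp only [mink, Pi.smul_apply, smul_eq_mul]
  ring

lemma mink_smul_right (c : ℝ) (x y : Fin 4 → ℝ) : mink x (c • y) = c * mink x y := by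
  simp only [mink, Pi.smul_apply, smul_eq_mul]
  ring

lemma n1_eq_smul_frameVec (φ : ℝ → ℝ) (v : ℝ) :
    n1 φ v = (√(deriv φ v ^ 2 + φ v ^ 2))⁻¹ •
      frameVec (deriv φ v * sin v + φ v * cos v) (-deriv φ v * cos v + φ v * sin v)
        (φ v ^ 2) 0 := by
  simp [n1, frameVec]

lemma n2_eq_smul_frameVec (f g φ : ℝ → ℝ) (u v : ℝ) :
    n2 f g φ u v = √(-deriv f u / (2 * deriv g u)) •
      frameVec (φ v * cos v) (φ v * sin v)
        ((deriv f u * φ v ^ 2 - 2 * deriv g u) / (2 * deriv f u)) 1 := by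
  simp [n2, frameVec]

lemma hasDerivAt_z_fst {f g : ℝ → ℝ} {f' g' u : ℝ} (hf : HasDerivAt f f' u)
    (hg : HasDerivAt g g' u) (φ : ℝ → ℝ) (v : ℝ) :
    HasDerivAt (fun t => z f g φ t v)
      (frameVec (f' * φ v * cos v) (f' * φ v * sin v) (f' * φ v ^ 2 / 2 + g') f') u :=
  ((((hf.mul_const _).mul_const _).smul_const e1).add
    (((hf.mul_const _).mul_const _).smul_const e2) |>.add
    ((((hf.mul_const _).div_const 2).add hg).smul_const xi1)).add (hf.smul_const xi2)

lemma hasDerivAt_z_snd {φ : ℝ → ℝ} {φ' v : ℝ} (hφ : HasDerivAt φ φ' v) (f g : ℝ → ℝ)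
    (u : ℝ) :
    HasDerivAt (fun t => z f g φ u t)
      (frameVec (f u * (φ' * cos v - φ v * sin v)) (f u * (φ' * sin v + φ v * cos v))
        (f u * φ v * φ') 0) v := by
  have H := ((((hφ.const_mul (f u)).mul (hasDerivAt_cos v)).smul_const e1).add
    (((hφ.const_mul (f u)).mul (hasDerivAt_sin v)).smul_const e2) |>.add
    (((((hφ.pow 2).const_mul (f u)).div_const 2).add_const (g u)).smul_const xi1)).add_const
    (f u • xi2)
  refine (H : HasDerivAt (fun t => z f g φ u t) _ v).congr_deriv ?_
  simp only [frameVec, zero_smul, add_zero]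
  congr 3 <;> ring

lemma zu_eq {f g : ℝ → ℝ} {u : ℝ} (hf : DifferentiableAt ℝ f u) (hg : DifferentiableAt ℝ g u)
    (φ : ℝ → ℝ) (v : ℝ) :
    zu f g φ u v = frameVec (deriv f u * φ v * cos v) (deriv f u * φ v * sin v)
      (deriv f u * φ v ^ 2 / 2 + deriv g u) (deriv f u) :=
  (hasDerivAt_z_fst hf.hasDerivAt hg.hasDerivAt φ v).deriv

lemma zv_eq {φ : ℝ → ℝ} {v : ℝ} (hφ : DifferentiableAt ℝ φ v) (f g : ℝ → ℝ) (u : ℝ) :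
    zv f g φ u v = frameVec (f u * (deriv φ v * cos v - φ v * sin v))
      (f u * (deriv φ v * sin v + φ v * cos v)) (f u * φ v * deriv φ v) 0 :=
  (hasDerivAt_z_snd hφ.hasDerivAt f g u).deriv

lemma mink_n1_self {φ : ℝ → ℝ} {v : ℝ} (h : 0 < deriv φ v ^ 2 + φ v ^ 2) :
    mink (n1 φ v) (n1 φ v) = 1 := by
  rw [n1_eq_smul_frameVec, mink_smul_left, mink_smul_right, mink_frameVec, ← mul_assoc,
    ← mul_inv, mul_self_sqrt h.le]
  field_simp
  linear_combination (deriv φ v ^ 2 + φ v ^ 2) * sin_sq_add_cos_sq v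

lemma mink_n2_self {f g : ℝ → ℝ} {u : ℝ} (h : 0 < -(deriv f u * deriv g u)) (φ : ℝ → ℝ)
    (v : ℝ) : mink (n2 f g φ u v) (n2 f g φ u v) = -1 := by
  obtain ⟨hf, hg⟩ := mul_ne_zero_iff.mp (neg_ne_zero.mp h.ne')
  have hpos : 0 ≤ -deriv f u / (2 * deriv g u) := by
    rw [show -deriv f u / (2 * deriv g u) = -(deriv f u * deriv g u) / (2 * deriv g u ^ 2) by
      field_simp]
    positivity
  rw [n2_eq_smul_frameVec, mink_smul_left, mink_smul_right, mink_frameVec, ← mul_assoc,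
    mul_self_sqrt hpos]
  field_simp
  linear_combination -2 * deriv f u * φ v ^ 2 * sin_sq_add_cos_sq v

lemma mink_n1_n2 (f g φ : ℝ → ℝ) (u v : ℝ) : mink (n1 φ v) (n2 f g φ u v) = 0 := by
  rw [n1_eq_smul_frameVec, n2_eq_smul_frameVec, mink_smul_left, mink_smul_right, mink_frameVec]
  linear_combination (√(deriv φ v ^ 2 + φ v ^ 2))⁻¹ * √(-deriv f u / (2 * deriv g u)) *
    φ v ^ 2 * sin_sq_add_cos_sq v

lemma mink_n1_zu {f g : ℝ → ℝ} {u : ℝ} (hf : DifferentiableAt ℝ f u)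
    (hg : DifferentiableAt ℝ g u) (φ : ℝ → ℝ) (v : ℝ) : mink (n1 φ v) (zu f g φ u v) = 0 := by
  rw [n1_eq_smul_frameVec, zu_eq hf hg, mink_smul_left, mink_frameVec]
  linear_combination (√(deriv φ v ^ 2 + φ v ^ 2))⁻¹ * deriv f u * φ v ^ 2 * sin_sq_add_cos_sq v

lemma mink_n1_zv {φ : ℝ → ℝ} {v : ℝ} (hφ : DifferentiableAt ℝ φ v) (f g : ℝ → ℝ) (u : ℝ) :
    mink (n1 φ v) (zv f g φ u v) = 0 := by
  rw [n1_eq_smul_frameVec, zv_eq hφ, mink_smul_left, mink_frameVec]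
  ring

lemma mink_n2_zu {f g : ℝ → ℝ} {u : ℝ} (hf : DifferentiableAt ℝ f u)
    (hg : DifferentiableAt ℝ g u) (hf' : deriv f u ≠ 0) (φ : ℝ → ℝ) (v : ℝ) :
    mink (n2 f g φ u v) (zu f g φ u v) = 0 := by
  rw [n2_eq_smul_frameVec, zu_eq hf hg, mink_smul_left, mink_frameVec]
  refine mul_eq_zero_of_right _ ?_
  field_simp
  linear_combination 2 * deriv f u * φ v ^ 2 * sin_sq_add_cos_sq v

lemma mink_n2_zv {φ : ℝ → ℝ} {v : ℝ} (hφ : DifferentiableAt ℝ φ v) (f g : ℝ → ℝ) (u : ℝ) :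
    mink (n2 f g φ u v) (zv f g φ u v) = 0 := by
  rw [n2_eq_smul_frameVec, zv_eq hφ, mink_smul_left, mink_frameVec]
  linear_combination √(-deriv f u / (2 * deriv g u)) * f u * φ v * deriv φ v * sin_sq_add_cos_sq v

theorem statement3_general
    (I J : Set ℝ) (hJopen : IsOpen J)
    (f g φ : ℝ → ℝ)
    (hφ : ContDiffOn ℝ (⊤ : ℕ∞) φ J)
    (hfg : ∀ u ∈ I, 0 < -(deriv f u * deriv g u))
    (hφpos : ∀ v ∈ J, 0 < (deriv φ v) ^ 2 + (φ v) ^ 2) :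
    ∀ u ∈ I, ∀ v ∈ J,
      mink (n1 φ v) (n1 φ v) = 1 ∧
      mink (n2 f g φ u v) (n2 f g φ u v) = -1 ∧
      mink (n1 φ v) (n2 f g φ u v) = 0 ∧
      mink (n1 φ v) (zu f g φ u v) = 0 ∧
      mink (n1 φ v) (zv f g φ u v) = 0 ∧
      mink (n2 f g φ u v) (zu f g φ u v) = 0 ∧
      mink (n2 f g φ u v) (zv f g φ u v) = 0 := by
  intro u hu v hv
  obtain ⟨hf', hg'⟩ := mul_ne_zero_iff.mp (neg_ne_zero.mp (hfg u hu).ne')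
  -- differentiability of `f`, `g` is free: `deriv` is `0` where a function is not differentiable
  have hf := differentiableAt_of_deriv_ne_zero hf'
  have hg := differentiableAt_of_deriv_ne_zero hg'
  have hφv : DifferentiableAt ℝ φ v :=
    (hφ.contDiffAt (hJopen.mem_nhds hv)).differentiableAt (by simp)
  exact ⟨mink_n1_self (hφpos v hv), mink_n2_self (hfg u hu) φ v, mink_n1_n2 f g φ u v,
    mink_n1_zu hf hg φ v, mink_n1_zv hφv f g u, mink_n2_zu hf hg hf' φ v, mink_n2_zv hφv f g u⟩

/-- `n₁, n₂` form a pseudo-orthonormal normal frame of the meridian surface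
of parabolic type: `⟨n₁,n₁⟩ = 1`, `⟨n₂,n₂⟩ = −1`, `⟨n₁,n₂⟩ = 0`, and both are
orthogonal to `z_u` and `z_v`. -/
theorem statement3
    (I J : Set ℝ) (hIopen : IsOpen I) (hIconn : IsPreconnected I)
    (hJopen : IsOpen J) (hJconn : IsPreconnected J)
    (f g φ : ℝ → ℝ)
    (hf : ContDiffOn ℝ (⊤ : ℕ∞) f I) (hg : ContDiffOn ℝ (⊤ : ℕ∞) g I)
    (hφ : ContDiffOn ℝ (⊤ : ℕ∞) φ J)
    (hfpos : ∀ u ∈ I, 0 < f u)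
    (hfg : ∀ u ∈ I, 0 < -(deriv f u * deriv g u))
    (hφpos : ∀ v ∈ J, 0 < (deriv φ v) ^ 2 + (φ v) ^ 2) :
    ∀ u ∈ I, ∀ v ∈ J,
      mink (n1 φ v) (n1 φ v) = 1 ∧
      mink (n2 f g φ u v) (n2 f g φ u v) = -1 ∧
      mink (n1 φ v) (n2 f g φ u v) = 0 ∧
      mink (n1 φ v) (zu f g φ u v) = 0 ∧
      mink (n1 φ v) (zv f g φ u v) = 0 ∧
      mink (n2 f g φ u v) (zu f g φ u v) = 0 ∧
      mink (n2 f g φ u v) (zv f g φ u v) = 0 :=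
  statement3_general I J hJopen f g φ hφ hfg hφpos

end
end MeridianParabolic
end

section
/- Let a ≠ 0 be a real constant, I ⊂ (0,∞) an open interval, and g : I → ℝ twice continuously differentiable with g'(u) < 0 for all u ∈ I. Then g satisfies the ordinary differential equation −u·g''(u) + 2g'(u) = a·(−2g'(u))^{3/2} for all u ∈ I if and only if there exists a constant c with c − au > 0 for all u ∈ I and g'(u) = −u²/(2(c − au)²) for all u ∈ I. -/
/-!
Put `w(u) = u / √(−2 g'(u))`. Differentiating, `w' = −(−u g'' + 2 g') / (−2 g')^{3/2}`, so the
ODE says exactly that `w + a u` has zero derivative, i.e. (on the connected set `I`) that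
`w(u) = c − a u` for a constant `c`; solving for `g'` gives the stated formula.
-/

namespace MeridianParabolic

noncomputable section

lemma sq_rpow_three_halves {r : ℝ} (hr : 0 ≤ r) : (r ^ 2) ^ ((3 : ℝ) / 2) = r ^ 3 := by
  rw [← Real.rpow_natCast r 2, ← Real.rpow_mul hr,
    show ((2 : ℕ) : ℝ) * (3 / 2) = ((3 : ℕ) : ℝ) by norm_num, Real.rpow_natCast]

lemma hasDerivAt_div_sqrt_neg_two_mul {f : ℝ → ℝ} {f' x : ℝ} (hf : HasDerivAt f f' x)
    (hx : f x < 0) :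
    HasDerivAt (fun t => t / √(-2 * f t)) ((-2 * f x + x * f') / √(-2 * f x) ^ 3) x := by
  have hpos : 0 < -2 * f x := by linarith
  have hs : 0 < √(-2 * f x) := Real.sqrt_pos.2 hpos
  have hs2 : √(-2 * f x) ^ 2 = -2 * f x := Real.sq_sqrt hpos.le
  have hsqrt := (Real.hasDerivAt_sqrt hpos.ne').comp x (hf.const_mul (-2))
  refine ((hasDerivAt_id x).div hsqrt hs.ne').congr_deriv ?_
  simp only [Function.comp_apply, id]
  generalize √(-2 * f x) = s at hs hs2 ⊢
  field_simp
  linear_combination hs2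

lemma ode_iff_hasDerivAt_div_sqrt_add {f : ℝ → ℝ} {f' x : ℝ} (a : ℝ) (hf : HasDerivAt f f' x)
    (hx : f x < 0) :
    -x * f' + 2 * f x = a * (-2 * f x) ^ ((3 : ℝ) / 2) ↔
      HasDerivAt (fun t => t / √(-2 * f t) + a * t) 0 x := by
  have hpos : 0 < -2 * f x := by linarith
  have hs : 0 < √(-2 * f x) := Real.sqrt_pos.2 hpos
  have hpow : (-2 * f x) ^ ((3 : ℝ) / 2) = √(-2 * f x) ^ 3 := by
    rw [← sq_rpow_three_halves hs.le, Real.sq_sqrt hpos.le]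
  have hw := (hasDerivAt_div_sqrt_neg_two_mul hf hx).add ((hasDerivAt_id x).const_mul a)
  rw [hpow]
  constructor
  · intro hode
    refine hw.congr_deriv ?_
    generalize √(-2 * f x) = s at hs hode ⊢
    field_simp
    linear_combination -hode
  · intro hzero
    have h := hzero.unique hw
    generalize √(-2 * f x) = s at hs h ⊢
    field_simp at h
    linear_combination h

lemma div_sqrt_neg_two_mul_eq_iff {p u w : ℝ} (hp : p < 0) (hu : 0 < u) :
    u / √(-2 * p) = w ↔ 0 < w ∧ p = -(u ^ 2) / (2 * w ^ 2) := by
  have hpos : 0 < -2 * p := by linarith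
  have hs : 0 < √(-2 * p) := Real.sqrt_pos.2 hpos
  constructor
  · rintro rfl
    refine ⟨by positivity, ?_⟩
    have hs2 := Real.sq_sqrt hpos.le
    generalize √(-2 * p) = s at hs hs2 ⊢
    field_simp
    linear_combination hs2
  · rintro ⟨hw, rfl⟩
    have hsq : -2 * (-(u ^ 2) / (2 * w ^ 2)) = (u / w) ^ 2 := by
      field_simp
    rw [hsq, Real.sqrt_sq (by positivity)]
    field_simp

theorem statement10_general
    (a : ℝ)
    (I : Set ℝ) (hIopen : IsOpen I) (hIconn : IsPreconnected I)
    (hIpos : I ⊆ Set.Ioi (0 : ℝ))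
    (g : ℝ → ℝ) (hg : ContDiffOn ℝ 2 g I)
    (hgd : ∀ u ∈ I, deriv g u < 0) :
    (∀ u ∈ I, -u * deriv (deriv g) u + 2 * deriv g u =
        a * (-2 * deriv g u) ^ ((3 : ℝ) / 2)) ↔
      ∃ c : ℝ, (∀ u ∈ I, 0 < c - a * u) ∧
        ∀ u ∈ I, deriv g u = -(u ^ 2) / (2 * (c - a * u) ^ 2) := by
  have hg' : DifferentiableOn ℝ (deriv g) I :=
    (((contDiffOn_succ_iff_deriv_of_isOpen (n := 1) hIopen).1 hg).2.2).differentiableOn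
      one_ne_zero
  set w : ℝ → ℝ := fun t => t / √(-2 * deriv g t) + a * t
  have hode : ∀ u ∈ I, (-u * deriv (deriv g) u + 2 * deriv g u =
      a * (-2 * deriv g u) ^ ((3 : ℝ) / 2)) ↔ HasDerivAt w 0 u := fun u hu =>
    ode_iff_hasDerivAt_div_sqrt_add a
      ((hg' u hu).differentiableAt (hIopen.mem_nhds hu)).hasDerivAt (hgd u hu)
  have hsolve : ∀ c, ∀ u ∈ I, w u = c ↔
      0 < c - a * u ∧ deriv g u = -(u ^ 2) / (2 * (c - a * u) ^ 2) := fun c u hu => by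
    rw [← div_sqrt_neg_two_mul_eq_iff (hgd u hu) (hIpos hu), eq_sub_iff_add_eq]
  refine (forall₂_congr hode).trans ⟨fun hw => ?_, fun ⟨c, hc, hformula⟩ u hu => ?_⟩
  · obtain ⟨c, hc⟩ := hIopen.exists_is_const_of_deriv_eq_zero hIconn
      (fun u hu => (hw u hu).differentiableAt.differentiableWithinAt) (fun u hu => (hw u hu).deriv)
    exact ⟨c, fun u hu => ((hsolve c u hu).1 (hc u hu)).1,
      fun u hu => ((hsolve c u hu).1 (hc u hu)).2⟩
  · have hwc : w =ᶠ[nhds u] fun _ => c := Filter.eventually_of_mem (hIopen.mem_nhds hu)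
      fun t ht => (hsolve c t ht).2 ⟨hc t ht, hformula t ht⟩
    exact (hasDerivAt_const u c).congr_of_eventuallyEq hwc

/-- for `a ≠ 0`, `I ⊂ (0,∞)` an open interval and `g` twice continuously
differentiable with `g' < 0` on `I`, the ODE `−u g'' + 2g' = a(−2g')^{3/2}` holds on `I`
if and only if there is a constant `c` with `c − au > 0` on `I` and
`g'(u) = −u²/(2(c − au)²)` on `I`. -/
theorem statement10
    (a : ℝ) (ha : a ≠ 0)
    (I : Set ℝ) (hIopen : IsOpen I) (hIconn : IsPreconnected I)
    (hIpos : I ⊆ Set.Ioi (0 : ℝ))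
    (g : ℝ → ℝ) (hg : ContDiffOn ℝ 2 g I)
    (hgd : ∀ u ∈ I, deriv g u < 0) :
    (∀ u ∈ I, -u * deriv (deriv g) u + 2 * deriv g u =
        a * (-2 * deriv g u) ^ ((3 : ℝ) / 2)) ↔
      ∃ c : ℝ, (∀ u ∈ I, 0 < c - a * u) ∧
        ∀ u ∈ I, deriv g u = -(u ^ 2) / (2 * (c - a * u) ^ 2) :=
  statement10_general a I hIopen hIconn hIpos g hg hgd

end
end MeridianParabolic
end

section
/- Let φ : J → ℝ be smooth on an open interval J with φ̇² + φ² > 0 on J, and suppose there is a constant a such that φ(v)φ̈(v) − 2φ̇(v)² − φ(v)² = a·(φ̇(v)² + φ(v)²)^{3/2} for all v ∈ J. Then for all v ∈ J, the derivative of the function v ↦ (φ̇(v)⁴ + φ(v)³φ̈(v))/(φ̇(v)² + φ(v)²)² equals −a²·φ(v)·φ̇(v). -/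
namespace MeridianParabolic

noncomputable section

/-!
Write `Q = φ̇² + φ²`. Solving the curvature equation for `φ³φ̈` gives
`φ̇⁴ + φ³φ̈ = Q² + a φ² Q^{3/2}`, so the ratio equals `1 + a φ² / √Q` on `J`, and this no longer
involves `φ̈`. Its derivative is `a φ φ̇ (2Q − φφ̈ − φ²) / Q^{3/2}`, and by the curvature equation
again `2Q − φφ̈ − φ² = −a Q^{3/2}`.
-/

lemma rpow_three_halves_eq_mul_sqrt {x : ℝ} (hx : 0 ≤ x) : x ^ ((3 : ℝ) / 2) = x * √x := by
  rw [show (3 : ℝ) / 2 = 1 + 1 / 2 by norm_num, Real.rpow_add' hx (by norm_num), Real.rpow_one,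
    Real.sqrt_eq_rpow]

lemma ratio_eq_of_curvature_eq {a u u' u'' : ℝ} (hQ : 0 < u' ^ 2 + u ^ 2)
    (hκ : u * u'' - 2 * u' ^ 2 - u ^ 2 = a * (u' ^ 2 + u ^ 2) ^ ((3 : ℝ) / 2)) :
    (u' ^ 4 + u ^ 3 * u'') / (u' ^ 2 + u ^ 2) ^ 2 = 1 + a * u ^ 2 / √(u' ^ 2 + u ^ 2) := by
  rw [rpow_three_halves_eq_mul_sqrt hQ.le] at hκ
  have hs : √(u' ^ 2 + u ^ 2) * √(u' ^ 2 + u ^ 2) = u' ^ 2 + u ^ 2 := Real.mul_self_sqrt hQ.le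
  have hs0 : √(u' ^ 2 + u ^ 2) ≠ 0 := (Real.sqrt_pos.mpr hQ).ne'
  field_simp
  linear_combination u ^ 2 * √(u' ^ 2 + u ^ 2) * hκ + a * u ^ 2 * (u' ^ 2 + u ^ 2) * hs

lemma hasDerivAt_one_add_div_sqrt {φ φ' : ℝ → ℝ} {φ'' a v : ℝ}
    (hφ : HasDerivAt φ (φ' v) v) (hφ' : HasDerivAt φ' φ'' v)
    (hQ : 0 < φ' v ^ 2 + φ v ^ 2)
    (hκ : φ v * φ'' - 2 * φ' v ^ 2 - φ v ^ 2 = a * (φ' v ^ 2 + φ v ^ 2) ^ ((3 : ℝ) / 2)) :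
    HasDerivAt (fun w => 1 + a * φ w ^ 2 / √(φ' w ^ 2 + φ w ^ 2)) (-(a ^ 2) * φ v * φ' v) v := by
  rw [rpow_three_halves_eq_mul_sqrt hQ.le] at hκ
  have hs : √(φ' v ^ 2 + φ v ^ 2) * √(φ' v ^ 2 + φ v ^ 2) = φ' v ^ 2 + φ v ^ 2 :=
    Real.mul_self_sqrt hQ.le
  have hs0 : √(φ' v ^ 2 + φ v ^ 2) ≠ 0 := (Real.sqrt_pos.mpr hQ).ne'
  have hsqrt := (Real.hasDerivAt_sqrt hQ.ne').comp v ((hφ'.pow 2).add (hφ.pow 2))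
  refine ((hasDerivAt_const v (1 : ℝ)).add (((hφ.pow 2).const_mul a).div hsqrt hs0)).congr_deriv ?_
  norm_num
  field_simp
  linear_combination (-a * φ v * φ' v) * hκ +
    (2 * a * φ v * φ' v + a ^ 2 * φ v * φ' v * √(φ' v ^ 2 + φ v ^ 2)) * hs

open Topology in
theorem statement14_general
    (J : Set ℝ) (hJopen : IsOpen J)
    (φ : ℝ → ℝ) (hφ : ContDiffOn ℝ (⊤ : ℕ∞) φ J)
    (hφpos : ∀ v ∈ J, 0 < (deriv φ v) ^ 2 + (φ v) ^ 2)
    (a : ℝ)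
    (hκ : ∀ v ∈ J, φ v * deriv (deriv φ) v - 2 * (deriv φ v) ^ 2 - (φ v) ^ 2 =
      a * ((deriv φ v) ^ 2 + (φ v) ^ 2) ^ ((3 : ℝ) / 2)) :
    ∀ v ∈ J,
      deriv (fun w => ((deriv φ w) ^ 4 + (φ w) ^ 3 * deriv (deriv φ) w) /
          ((deriv φ w) ^ 2 + (φ w) ^ 2) ^ 2) v =
        -(a ^ 2) * φ v * deriv φ v := by
  intro v hv
  have hJv : J ∈ 𝓝 v := hJopen.mem_nhds hv
  have hφd : HasDerivAt φ (deriv φ v) v :=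
    ((hφ.differentiableOn (by simp)).differentiableAt hJv).hasDerivAt
  have hφ'd : HasDerivAt (deriv φ) (deriv (deriv φ) v) v :=
    (((hφ.deriv_of_isOpen (m := (⊤ : ℕ∞)) hJopen (by simp)).differentiableOn
      (by simp)).differentiableAt hJv).hasDerivAt
  have hratio : (fun w => ((deriv φ w) ^ 4 + (φ w) ^ 3 * deriv (deriv φ) w) /
      ((deriv φ w) ^ 2 + (φ w) ^ 2) ^ 2) =ᶠ[𝓝 v]
      fun w => 1 + a * φ w ^ 2 / √(deriv φ w ^ 2 + φ w ^ 2) :=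
    Filter.eventually_of_mem hJv fun w hw => ratio_eq_of_curvature_eq (hφpos w hw) (hκ w hw)
  rw [hratio.deriv_eq]
  exact (hasDerivAt_one_add_div_sqrt hφd hφ'd (hφpos v hv) (hκ v hv)).deriv

/-- if `φφ̈ − 2φ̇² − φ² = a(φ̇² + φ²)^{3/2}` on `J` for a constant `a`,
then the derivative of `v ↦ (φ̇⁴ + φ³φ̈)/(φ̇² + φ²)²` equals `−a²φφ̇` on `J`. -/
theorem statement14
    (J : Set ℝ) (hJopen : IsOpen J) (hJconn : IsPreconnected J)
    (φ : ℝ → ℝ) (hφ : ContDiffOn ℝ (⊤ : ℕ∞) φ J)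
    (hφpos : ∀ v ∈ J, 0 < (deriv φ v) ^ 2 + (φ v) ^ 2)
    (a : ℝ)
    (hκ : ∀ v ∈ J, φ v * deriv (deriv φ) v - 2 * (deriv φ v) ^ 2 - (φ v) ^ 2 =
      a * ((deriv φ v) ^ 2 + (φ v) ^ 2) ^ ((3 : ℝ) / 2)) :
    ∀ v ∈ J,
      deriv (fun w => ((deriv φ w) ^ 4 + (φ w) ^ 3 * deriv (deriv φ) w) /
          ((deriv φ w) ^ 2 + (φ w) ^ 2) ^ 2) v =
        -(a ^ 2) * φ v * deriv φ v :=
  statement14_general J hJopen φ hφ hφpos a hκ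

end
end MeridianParabolic
end

section
/- (Plane sections of the paraboloid have constant curvature.) Let A, B, C be real constants with A² + B² − 2C > 0, set θ(v) = A cos v + B sin v, let ε ∈ {1,−1}, and let J be an open interval on which θ(v)² − 2C > 0. Define φ(v) = −θ(v) + ε√(θ(v)² − 2C) and assume φ̇(v)² + φ(v)² > 0 on J. Then κ̄(v)² = 1/(A² + B² − 2C) for all v ∈ J, where κ̄(v) = (φφ̈ − 2φ̇² − φ²)/(φ̇² + φ²)^{3/2}; in particular κ̄ is constant on J and the corresponding plane section of the paraboloid 𝒫² is a curve of constant nonzero curvature. -/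
namespace MeridianParabolic

noncomputable section

/-- The curvature `κ_m(u) = (f'g'' − g'f'')/(−2f'g')^{3/2}` of the meridians. -/
def kappam (f g : ℝ → ℝ) (u : ℝ) : ℝ :=
  (deriv f u * deriv (deriv g) u - deriv g u * deriv (deriv f) u) /
    (-2 * deriv f u * deriv g u) ^ ((3 : ℝ) / 2)

/-- The curvature `κ̄(v) = (φφ̈ − 2φ̇² − φ²)/(φ̇² + φ²)^{3/2}`. -/
def kappabar (φ : ℝ → ℝ) (v : ℝ) : ℝ :=
  (φ v * deriv (deriv φ) v - 2 * (deriv φ v) ^ 2 - (φ v) ^ 2) /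
    ((deriv φ v) ^ 2 + (φ v) ^ 2) ^ ((3 : ℝ) / 2)

/-!
With `θ = A cos v + B sin v`, `θ' = B cos v − A sin v` (so that `θ'' = −θ` and
`θ² + θ'² = A² + B²`) and `σ = ε√(θ² − 2C)`, the radius is `φ = −θ + σ`, where `σ² = θ² − 2C`
and `σσ̇ = θθ'`. Hence `φ̇` and `φ̈` are rational in `θ, θ', σ`, and after clearing the powers of
`σ` the relation `(φφ̈ − 2φ̇² − φ²)² (θ'² + σ²) = (φ̇² + φ²)³` is a polynomial identity. Since
`θ'² + σ² = A² + B² − 2C`, this is `κ̄² = 1/(A² + B² − 2C)`.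
-/

def sinusoid (A B v : ℝ) : ℝ := A * Real.cos v + B * Real.sin v

def signedRoot (A B C ε v : ℝ) : ℝ := ε * √(sinusoid A B v ^ 2 - 2 * C)

def sectionRadius (A B C ε v : ℝ) : ℝ := -sinusoid A B v + signedRoot A B C ε v

theorem hasDerivAt_sinusoid (A B v : ℝ) :
    HasDerivAt (sinusoid A B) (sinusoid B (-A) v) v :=
  (((Real.hasDerivAt_cos v).const_mul A).add ((Real.hasDerivAt_sin v).const_mul B)).congr_deriv
    (by simp only [sinusoid]; ring)

theorem sinusoid_sq_add_sinusoid_sq (A B v : ℝ) :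
    sinusoid A B v ^ 2 + sinusoid B (-A) v ^ 2 = A ^ 2 + B ^ 2 := by
  simp only [sinusoid]
  linear_combination (A ^ 2 + B ^ 2) * Real.sin_sq_add_cos_sq v

theorem continuous_sinusoid (A B : ℝ) : Continuous (sinusoid A B) := by
  unfold sinusoid
  fun_prop

section Branch

variable {A B C ε v : ℝ}

theorem signedRoot_sq (hε : ε ^ 2 = 1) (hv : 0 ≤ sinusoid A B v ^ 2 - 2 * C) :
    signedRoot A B C ε v ^ 2 = sinusoid A B v ^ 2 - 2 * C := by
  rw [signedRoot, mul_pow, hε, one_mul, Real.sq_sqrt hv]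

theorem signedRoot_ne_zero (hε : ε ^ 2 = 1) (hv : 0 < sinusoid A B v ^ 2 - 2 * C) :
    signedRoot A B C ε v ≠ 0 := by
  rw [← pow_ne_zero_iff two_ne_zero, signedRoot_sq hε hv.le]
  exact hv.ne'

theorem hasDerivAt_signedRoot (hε : ε ^ 2 = 1) (hv : 0 < sinusoid A B v ^ 2 - 2 * C) :
    HasDerivAt (signedRoot A B C ε)
      (sinusoid A B v * sinusoid B (-A) v / signedRoot A B C ε v) v := by
  have hσ := signedRoot_ne_zero hε hv
  have hε0 : ε ≠ 0 := left_ne_zero_of_mul hσ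
  refine ((((hasDerivAt_sinusoid A B v).fun_pow 2).sub_const (2 * C)).sqrt hv.ne').const_mul ε
    |>.congr_deriv ?_
  simp only [signedRoot] at hσ ⊢
  field_simp
  norm_num
  linear_combination (2 * sinusoid A B v * sinusoid B (-A) v) * hε

theorem hasDerivAt_sectionRadius (hε : ε ^ 2 = 1) (hv : 0 < sinusoid A B v ^ 2 - 2 * C) :
    HasDerivAt (sectionRadius A B C ε)
      (-sinusoid B (-A) v + sinusoid A B v * sinusoid B (-A) v / signedRoot A B C ε v) v :=
  (hasDerivAt_sinusoid A B v).neg.add (hasDerivAt_signedRoot hε hv)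

theorem deriv_deriv_sectionRadius (hε : ε ^ 2 = 1) (hv : 0 < sinusoid A B v ^ 2 - 2 * C) :
    deriv (deriv (sectionRadius A B C ε)) v =
      sinusoid A B v + (sinusoid B (-A) v ^ 2 - sinusoid A B v ^ 2) / signedRoot A B C ε v
        - sinusoid A B v ^ 2 * sinusoid B (-A) v ^ 2 / signedRoot A B C ε v ^ 3 := by
  have hU : IsOpen {w | 0 < sinusoid A B w ^ 2 - 2 * C} :=
    isOpen_lt continuous_const (((continuous_sinusoid A B).pow 2).sub continuous_const)
  have hderiv : deriv (sectionRadius A B C ε) =ᶠ[nhds v] fun w =>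
      -sinusoid B (-A) w + sinusoid A B w * sinusoid B (-A) w / signedRoot A B C ε w :=
    Filter.eventuallyEq_of_mem (hU.mem_nhds hv)
      fun w hw => (hasDerivAt_sectionRadius hε hw).deriv
  have hθ' : HasDerivAt (sinusoid B (-A)) (-sinusoid A B v) v :=
    (hasDerivAt_sinusoid B (-A) v).congr_deriv (by simp only [sinusoid]; ring)
  have hσ := signedRoot_ne_zero hε hv
  rw [hderiv.deriv_eq]
  refine HasDerivAt.deriv <| HasDerivAt.congr_deriv (hθ'.fun_neg.fun_add
    (((hasDerivAt_sinusoid A B v).fun_mul hθ').fun_div (hasDerivAt_signedRoot hε hv) hσ)) ?_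
  field_simp
  ring

end Branch

/-- With `t = θ` and `p = θ'`, the three bracketed expressions are `φ`, `φ̇` and `φ̈`. -/
theorem curvature_identity (t p σ : ℝ) (hσ : σ ≠ 0) :
    ((-t + σ) * (t + (p ^ 2 - t ^ 2) / σ - t ^ 2 * p ^ 2 / σ ^ 3)
        - 2 * (-p + t * p / σ) ^ 2 - (-t + σ) ^ 2) ^ 2 * (p ^ 2 + σ ^ 2)
      = ((-p + t * p / σ) ^ 2 + (-t + σ) ^ 2) ^ 3 := by
  field_simp
  ring

theorem kappabar_sq_eq_one_div {φ : ℝ → ℝ} {v K : ℝ} (hK : K ≠ 0)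
    (hpos : 0 < deriv φ v ^ 2 + φ v ^ 2)
    (h : (φ v * deriv (deriv φ) v - 2 * deriv φ v ^ 2 - φ v ^ 2) ^ 2 * K
      = (deriv φ v ^ 2 + φ v ^ 2) ^ 3) :
    kappabar φ v ^ 2 = 1 / K := by
  have hrpow : ((deriv φ v ^ 2 + φ v ^ 2) ^ ((3 : ℝ) / 2)) ^ 2 = (deriv φ v ^ 2 + φ v ^ 2) ^ 3 := by
    rw [← Real.rpow_natCast, ← Real.rpow_mul hpos.le, ← Real.rpow_natCast]
    norm_num
  rw [kappabar, div_pow, hrpow, div_eq_div_iff (pow_pos hpos 3).ne' hK, one_mul, h]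

theorem statement16_general
    (A B C : ℝ)
    (ε : ℝ) (hε : ε = 1 ∨ ε = -1)
    (J : Set ℝ)
    (hθ : ∀ v ∈ J, 0 < (A * Real.cos v + B * Real.sin v) ^ 2 - 2 * C)
    (φ : ℝ → ℝ)
    (hφdef : ∀ v : ℝ, φ v = -(A * Real.cos v + B * Real.sin v) +
      ε * Real.sqrt ((A * Real.cos v + B * Real.sin v) ^ 2 - 2 * C))
    (hφpos : ∀ v ∈ J, 0 < (deriv φ v) ^ 2 + (φ v) ^ 2) :
    ∀ v ∈ J, (kappabar φ v) ^ 2 = 1 / (A ^ 2 + B ^ 2 - 2 * C) := by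
  obtain rfl : φ = sectionRadius A B C ε := funext hφdef
  have hε2 : ε ^ 2 = 1 := by rcases hε with rfl | rfl <;> norm_num
  intro v hv
  have hdisc : 0 < sinusoid A B v ^ 2 - 2 * C := hθ v hv
  have hσ := signedRoot_ne_zero hε2 hdisc
  have hK : A ^ 2 + B ^ 2 - 2 * C = sinusoid B (-A) v ^ 2 + signedRoot A B C ε v ^ 2 := by
    rw [signedRoot_sq hε2 hdisc.le, ← sinusoid_sq_add_sinusoid_sq A B v]
    ring
  refine kappabar_sq_eq_one_div (hK ▸ by positivity) (hφpos v hv) ?_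
  rw [(hasDerivAt_sectionRadius hε2 hdisc).deriv, deriv_deriv_sectionRadius hε2 hdisc, hK]
  exact curvature_identity _ _ _ hσ

/-- plane sections of the paraboloid have constant curvature: for
constants `A, B, C` with `A² + B² − 2C > 0`, `θ(v) = A cos v + B sin v`, `ε = ±1`, and
`φ = −θ + ε√(θ² − 2C)` on an open interval `J` where `θ² − 2C > 0`, the curvature
satisfies `κ̄(v)² = 1/(A² + B² − 2C)` on `J`; in particular `κ̄` is constant and the
corresponding plane section of the paraboloid `𝒫²` has constant nonzero curvature. -/
theorem statement16
    (A B C : ℝ) (hABC : 0 < A ^ 2 + B ^ 2 - 2 * C)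
    (ε : ℝ) (hε : ε = 1 ∨ ε = -1)
    (J : Set ℝ) (hJopen : IsOpen J) (hJconn : IsPreconnected J)
    (hθ : ∀ v ∈ J, 0 < (A * Real.cos v + B * Real.sin v) ^ 2 - 2 * C)
    (φ : ℝ → ℝ)
    (hφdef : ∀ v : ℝ, φ v = -(A * Real.cos v + B * Real.sin v) +
      ε * Real.sqrt ((A * Real.cos v + B * Real.sin v) ^ 2 - 2 * C))
    (hφpos : ∀ v ∈ J, 0 < (deriv φ v) ^ 2 + (φ v) ^ 2) :
    ∀ v ∈ J, (kappabar φ v) ^ 2 = 1 / (A ^ 2 + B ^ 2 - 2 * C) :=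
  statement16_general A B C ε hε J hθ φ hφdef hφpos

end
end MeridianParabolic
end
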